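/- If h : M → M' and h' : M' → M are homomorphisms between two models (both satisfying the reachability constraint), then the composite homomorphism h' ∘ h : M → M equals the identity homomorphism ⟨id_V, id_𝒲⟩ on M. -/

import Mathlib

/-!
Since homomorphisms compose, it suffices to show that every endomorphism `e` of a model
satisfying the reachability constraint is the identity. Base-labels and node variables are
interpreted by at most one node, so `e` fixes every labelled or assigned node; attributes are
functional, so `e` fixes everything attribute-accessible from a fixed node, i.e. every node.
A wrapping `W` then shares its nodes with `e(W)`, and disjointness of wrappings gives `e(W) = W`.
-/

/-- A signature for Feature Structures with Wrappings: finite sets of types,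
attributes and relations (with arities `m > 1`), together with base-labels
(node names), node variables and wrapping variables. -/
structure Signature where
  TYPE : Type
  ATTR : Type
  REL : Type
  arity : REL → ℕ
  NNAME : Type
  NVAR : Type
  WVAR : Type
  finTYPE : Finite TYPE
  finATTR : Finite ATTR
  finREL : Finite REL
  arity_gt_one : ∀ r, 1 < arity r

/-- A model: a Feature Structure with Wrappings `F = ⟨V, 𝒲, I⟩` together with an
assignment `g = ⟨g_N, g_W⟩`.  `V` is a nonempty set of nodes, `Wr` (`𝒲`) is a set of
pairwise disjoint nonempty subsets of `V` (the wrappings), `I` interprets types as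
node sets, attributes as partial functions `V ⇀ V`, `m`-ary relations as sets of
`m`-tuples of nodes, and base-labels as (at most one) nodes; `g_N : NVAR ⇀ V` and
`g_W : WVAR ⇀ 𝒲` are partial assignment functions. -/
structure Model (S : Signature) where
  V : Type
  v_nonempty : Nonempty V
  Wr : Set (Set V)
  wr_nonempty : ∀ W ∈ Wr, W.Nonempty
  wr_disjoint : ∀ W ∈ Wr, ∀ X ∈ Wr, W ≠ X → W ∩ X = ∅
  itype : S.TYPE → Set V
  iattr : S.ATTR → V → Option V
  irel : (r : S.REL) → Set (Fin (S.arity r) → V)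
  iname : S.NNAME → Option V
  gN : S.NVAR → Option V
  gW : S.WVAR → Option (Set V)
  gW_mem : ∀ x W, gW x = some W → W ∈ Wr

namespace Model

variable {S : Signature}

/-- The wrappings of a model, as a type. -/
def Wrp (M : Model S) : Type := {W : Set M.V // W ∈ M.Wr}

/-- Application of a path of attributes to a node (a partial function). -/
def pathApply (M : Model S) : List S.ATTR → M.V → Option M.V
  | [], v => some v
  | a :: p, v => (M.iattr a v).bind (M.pathApply p)

/-- `u` and `v` lie in the same w-set (the w-sets are the elements of the
partition `𝒲 ∪ {V \ ⋃𝒲}`). -/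
def sameW (M : Model S) (u v : M.V) : Prop :=
  (∃ W ∈ M.Wr, u ∈ W ∧ v ∈ W) ∨ (u ∉ ⋃₀ M.Wr ∧ v ∉ ⋃₀ M.Wr)

/-- The reachability constraint: every node is attribute-accessible from a
base-labelled or variable-assigned node lying in the same w-set. -/
def Reach (M : Model S) : Prop :=
  ∀ v : M.V, ∃ (u : M.V) (p : List S.ATTR),
    ((∃ b, M.iname b = some u) ∨ (∃ x, M.gN x = some u)) ∧
    M.sameW u v ∧ M.pathApply p u = some v

end Model

/-- A homomorphism `h = ⟨h_V, h_W⟩` of models, with `h_V : V → V' ⊎ 𝒲'` and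
`h_W : 𝒲 → 𝒲'`, preserving types, attributes, relations, base-labels, wrapping
membership and assignments.  (Preservation statements of the form
`h_V(I(p)(v)) = I'(p)(h_V(v))` force the relevant values of `h_V` to be nodes,
since attributes, types, relations, base-labels and node-variable assignments
only concern nodes.) -/
structure Hom {S : Signature} (M M' : Model S) where
  hV : M.V → M'.V ⊕ M'.Wrp
  hW : M.Wrp → M'.Wrp
  map_type : ∀ t v, v ∈ M.itype t → ∃ u, hV v = Sum.inl u ∧ u ∈ M'.itype t
  map_attr : ∀ a v v', M.iattr a v = some v' →
    ∃ u u', hV v = Sum.inl u ∧ hV v' = Sum.inl u' ∧ M'.iattr a u = some u'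
  map_rel : ∀ r f, f ∈ M.irel r →
    ∃ f', (∀ i, hV (f i) = Sum.inl (f' i)) ∧ f' ∈ M'.irel r
  map_name : ∀ b v, M.iname b = some v → ∃ u, M'.iname b = some u ∧ hV v = Sum.inl u
  map_wr : ∀ (W : M.Wrp), ∀ v ∈ W.val, ∃ u, hV v = Sum.inl u ∧ u ∈ (hW W).val
  map_gN : ∀ x v, M.gN x = some v → ∃ u, M'.gN x = some u ∧ hV v = Sum.inl u
  map_gW : ∀ x W, (h : M.gW x = some W) → M'.gW x = some (hW ⟨W, M.gW_mem x W h⟩).val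

/-- `M` subsumes `M'` (written `M ⊑ M'`) if there is a homomorphism from `M` to `M'`. -/
def Subsumes {S : Signature} (M M' : Model S) : Prop := Nonempty (Hom M M')

/-- The extension of the node map of a homomorphism to wrappings (via `h_W`). -/
def Hom.ext {S : Signature} {M M' : Model S} (h : Hom M M') :
    M.V ⊕ M.Wrp → M'.V ⊕ M'.Wrp :=
  Sum.elim h.hV (fun W => Sum.inr (h.hW W))

namespace Model

variable {S : Signature} (M : Model S)

theorem wrp_eq_of_mem {W X : M.Wrp} {v : M.V} (hW : v ∈ W.val) (hX : v ∈ X.val) : W = X := by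
  by_contra hne
  have hdisj := M.wr_disjoint W.val W.property X.val X.property (fun h => hne (Subtype.ext h))
  exact (Set.eq_empty_iff_forall_notMem.mp hdisj) v ⟨hW, hX⟩

end Model

namespace Hom

variable {S : Signature} {M M' M'' : Model S}

@[simp]
theorem ext_inl (f : Hom M M') (v : M.V) : f.ext (Sum.inl v) = f.hV v := rfl

def comp (g : Hom M' M'') (f : Hom M M') : Hom M M'' where
  hV := g.ext ∘ f.hV
  hW := g.hW ∘ f.hW
  map_type t v hv := by
    obtain ⟨u, hfu, hu⟩ := f.map_type t v hv
    obtain ⟨u', hgu, hu'⟩ := g.map_type t u hu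
    exact ⟨u', by simp [hfu, hgu], hu'⟩
  map_attr a v v' hvv' := by
    obtain ⟨u, u', hfu, hfu', huu'⟩ := f.map_attr a v v' hvv'
    obtain ⟨w, w', hgw, hgw', hww'⟩ := g.map_attr a u u' huu'
    exact ⟨w, w', by simp [hfu, hgw], by simp [hfu', hgw'], hww'⟩
  map_rel r t ht := by
    obtain ⟨t', hft, ht'⟩ := f.map_rel r t ht
    obtain ⟨t'', hgt, ht''⟩ := g.map_rel r t' ht'
    exact ⟨t'', fun i => by simp [hft, hgt], ht''⟩
  map_name b v hv := by
    obtain ⟨u, hu, hfu⟩ := f.map_name b v hv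
    obtain ⟨u', hu', hgu⟩ := g.map_name b u hu
    exact ⟨u', hu', by simp [hfu, hgu]⟩
  map_wr W v hv := by
    obtain ⟨u, hfu, hu⟩ := f.map_wr W v hv
    obtain ⟨u', hgu, hu'⟩ := g.map_wr (f.hW W) u hu
    exact ⟨u', by simp [hfu, hgu], hu'⟩
  map_gN x v hv := by
    obtain ⟨u, hu, hfu⟩ := f.map_gN x v hv
    obtain ⟨u', hu', hgu⟩ := g.map_gN x u hu
    exact ⟨u', hu', by simp [hfu, hgu]⟩
  map_gW x W hW := g.map_gW x _ (f.map_gW x W hW)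

theorem map_pathApply (f : Hom M M') {u v : M.V} {u' : M'.V} (hu : f.hV u = Sum.inl u') :
    ∀ {p : List S.ATTR}, M.pathApply p u = some v →
      ∃ v', f.hV v = Sum.inl v' ∧ M'.pathApply p u' = some v'
  | [], huv => by
    obtain rfl : u = v := Option.some_injective _ huv
    exact ⟨u', hu, rfl⟩
  | a :: p, huv => by
    obtain ⟨w, huw, hwv⟩ := Option.bind_eq_some_iff.mp huv
    obtain ⟨x, w', hx, hw', huw'⟩ := f.map_attr a u w huw
    obtain rfl : x = u' := Sum.inl_injective (hx.symm.trans hu)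
    obtain ⟨v', hv', hw'v'⟩ := f.map_pathApply hw' hwv
    exact ⟨v', hv', Option.bind_eq_some_iff.mpr ⟨w', huw', hw'v'⟩⟩

variable (e : Hom M M)

theorem hV_eq_inl_of_iname {b : S.NNAME} {u : M.V} (hb : M.iname b = some u) :
    e.hV u = Sum.inl u := by
  obtain ⟨u', hu', heu⟩ := e.map_name b u hb
  rw [hb, Option.some_inj] at hu'
  rwa [← hu'] at heu

theorem hV_eq_inl_of_gN {x : S.NVAR} {u : M.V} (hx : M.gN x = some u) :
    e.hV u = Sum.inl u := by
  obtain ⟨u', hu', heu⟩ := e.map_gN x u hx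
  rw [hx, Option.some_inj] at hu'
  rwa [← hu'] at heu

theorem hV_eq_inl_of_pathApply {u v : M.V} {p : List S.ATTR} (hu : e.hV u = Sum.inl u)
    (huv : M.pathApply p u = some v) : e.hV v = Sum.inl v := by
  obtain ⟨v', hv', huv'⟩ := e.map_pathApply hu huv
  rw [huv, Option.some_inj] at huv'
  rwa [← huv'] at hv'

theorem hV_eq_inl_of_reach (hM : M.Reach) (v : M.V) : e.hV v = Sum.inl v := by
  obtain ⟨u, p, hsrc, -, huv⟩ := hM v
  have hu : e.hV u = Sum.inl u := by
    rcases hsrc with ⟨b, hb⟩ | ⟨x, hx⟩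
    · exact e.hV_eq_inl_of_iname hb
    · exact e.hV_eq_inl_of_gN hx
  exact e.hV_eq_inl_of_pathApply hu huv

theorem hW_eq_self_of_reach (hM : M.Reach) (W : M.Wrp) : e.hW W = W := by
  obtain ⟨v, hv⟩ := M.wr_nonempty W.val W.property
  obtain ⟨u, heu, hu⟩ := e.map_wr W v hv
  obtain rfl : u = v := Sum.inl_injective (heu.symm.trans (e.hV_eq_inl_of_reach hM v))
  exact M.wrp_eq_of_mem hu hv

end Hom

theorem hom_comp_eq_id_general {S : Signature} {M M' : Model S}
    (hM : M.Reach) (h : Hom M M') (h' : Hom M' M) :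
    (∀ v : M.V, h'.ext (h.hV v) = Sum.inl v) ∧
    (∀ W : M.Wrp, h'.hW (h.hW W) = W) :=
  ⟨(h'.comp h).hV_eq_inl_of_reach hM, (h'.comp h).hW_eq_self_of_reach hM⟩

/-- If `h : M → M'` and `h' : M' → M` are homomorphisms between two
models (both satisfying the reachability constraint), then the composite
homomorphism `h' ∘ h : M → M` equals the identity homomorphism `⟨id_V, id_𝒲⟩` on `M`
(the identity homomorphism sends each node `v` to the node `v` and each wrapping `W`
to the wrapping `W`). -/
theorem hom_comp_eq_id {S : Signature} {M M' : Model S}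
    (hM : M.Reach) (hM' : M'.Reach) (h : Hom M M') (h' : Hom M' M) :
    (∀ v : M.V, h'.ext (h.hV v) = Sum.inl v) ∧
    (∀ W : M.Wrp, h'.hW (h.hW W) = W) :=
  hom_comp_eq_id_general hM h h'
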